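/- arXiv:math/0201016 — 6 statements merged into one kernel-verified Lean document; each statement's English description precedes it below -/
import Mathlib

section
/- Sub-Gaussian case of Lemma 2 (proved in its proof). Let ζ₁, …, ζ_l be i.i.d. real random variables with E(ζ₁) = 0 and Λ(λ) := log E(e^{λ ζ₁}) ≤ C₂ λ²/2 for all λ ∈ ℝ, and let G : ℝ → [0,∞) be measurable with G(x) ≤ C₁ x²/2 for all x ∈ ℝ. Then for every γ with 0 < γ < (C₁ C₂)^{−1} and every l ≥ 1: E exp{ γ l G( (ζ₁ + ⋯ + ζ_l)/l ) } ≤ (1 − γ C₁ C₂)^{−1/2}. -/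
/-!
Put `a = γ C₁ / l` and `S = ζ₁ + ⋯ + ζ_l`; the bound on `G` gives `γ l G (S / l) ≤ a S² / 2`.
Linearize the square with an independent standard Gaussian `U`, `exp (a s² / 2) = E exp (√a s U)`,
and exchange the two integrals. By independence `S` is sub-Gaussian with variance proxy `l C₂`, so
`E exp (√a u S) ≤ exp (c u² / 2)` with `c = γ C₁ C₂ < 1`, and `E exp (c U² / 2) = (1 - c) ^ (-1/2)`.
-/

open MeasureTheory Real ENNReal

namespace ProbabilityTheory

lemma lintegral_fintype_prod_eq_pow {ι E : Type*} [Fintype ι] [MeasurableSpace E]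
    (μ : Measure E) [IsProbabilityMeasure μ] (f : E → ℝ≥0∞) (hf : Measurable f) :
    ∫⁻ z : ι → E, ∏ i, f (z i) ∂Measure.pi (fun _ => μ) = (∫⁻ x, f x ∂μ) ^ Fintype.card ι := by
  rw [lintegral_prod_eq_prod_lintegral_of_indepFun _ _
      (iIndepFun_pi (X := fun _ => f) fun _ => hf.aemeasurable)
      fun i => hf.comp (measurable_pi_apply i)]
  simp_rw [fun i => (measurePreserving_eval (fun _ : ι => μ) i).lintegral_comp hf]
  simp

lemma lintegral_ofReal_exp_mul_gaussianReal (m : ℝ) (v : NNReal) (t : ℝ) :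
    ∫⁻ u, ENNReal.ofReal (rexp (t * u)) ∂gaussianReal m v
      = ENNReal.ofReal (rexp (m * t + v * t ^ 2 / 2)) := by
  rw [← ofReal_integral_eq_lintegral_ofReal (integrable_exp_mul_gaussianReal t)
    (ae_of_all _ fun _ => (exp_pos _).le)]
  exact congrArg _ (mgf_gaussianReal (X := id) (by simp) t)

lemma lintegral_ofReal_exp_mul_sq_gaussianReal {c : ℝ} (hc : c < 1) :
    ∫⁻ u, ENNReal.ofReal (rexp (c * u ^ 2 / 2)) ∂gaussianReal 0 1
      = ENNReal.ofReal ((1 - c) ^ (-(1 : ℝ) / 2)) := by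
  have hb : 0 < (1 - c) / 2 := by linarith
  have hdensity : ∀ u : ℝ, gaussianPDF 0 1 u * ENNReal.ofReal (rexp (c * u ^ 2 / 2))
      = ENNReal.ofReal ((√(2 * π))⁻¹ * rexp (-((1 - c) / 2) * u ^ 2)) := by
    intro u
    rw [gaussianPDF, gaussianPDFReal, NNReal.coe_one, mul_one, sub_zero,
      ← ENNReal.ofReal_mul (by positivity), mul_assoc, ← exp_add]
    congr 3
    ring
  rw [gaussianReal_of_var_ne_zero 0 one_ne_zero,
    lintegral_withDensity_eq_lintegral_mul _ (measurable_gaussianPDF 0 1) (by fun_prop)]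
  simp_rw [Pi.mul_apply, hdensity]
  rw [← ofReal_integral_eq_lintegral_ofReal ((integrable_exp_neg_mul_sq hb).const_mul _)
    (ae_of_all _ fun _ => by positivity), integral_const_mul, integral_gaussian]
  congr 1
  rw [div_div_eq_mul_div, mul_comm π 2, sqrt_div (by positivity), ← div_eq_inv_mul,
    div_right_comm, div_self (by positivity), neg_div, Real.rpow_neg (by linarith),
    ← sqrt_eq_rpow, one_div]

lemma lintegral_ofReal_exp_mul_sum_le {ι : Type*} [Fintype ι] (μ : Measure ℝ)
    [IsProbabilityMeasure μ] {σ : ℝ}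
    (hμ : ∀ t, ∫⁻ x, ENNReal.ofReal (rexp (t * x)) ∂μ ≤ ENNReal.ofReal (rexp (σ * t ^ 2 / 2)))
    (t : ℝ) :
    ∫⁻ z : ι → ℝ, ENNReal.ofReal (rexp (t * ∑ i, z i)) ∂Measure.pi (fun _ => μ)
      ≤ ENNReal.ofReal (rexp (Fintype.card ι * σ * t ^ 2 / 2)) := by
  have hprod : ∀ z : ι → ℝ, ENNReal.ofReal (rexp (t * ∑ i, z i))
      = ∏ i, ENNReal.ofReal (rexp (t * z i)) := fun z => by
    rw [Finset.mul_sum, exp_sum, ENNReal.ofReal_prod_of_nonneg fun i _ => (exp_pos _).le]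
  simp_rw [hprod]
  rw [lintegral_fintype_prod_eq_pow μ (fun x => ENNReal.ofReal (rexp (t * x))) (by fun_prop)]
  calc _ ≤ ENNReal.ofReal (rexp (σ * t ^ 2 / 2)) ^ Fintype.card ι := by gcongr; exact hμ t
    _ = _ := by
      rw [← ENNReal.ofReal_pow (exp_pos _).le, ← exp_nat_mul]
      ring_nf

lemma lintegral_ofReal_exp_mul_sq_le {Ω : Type*} [MeasurableSpace Ω] {ν : Measure Ω} [SFinite ν]
    {S : Ω → ℝ} (hS : Measurable S) {σ : ℝ}
    (hν : ∀ t, ∫⁻ ω, ENNReal.ofReal (rexp (t * S ω)) ∂ν ≤ ENNReal.ofReal (rexp (σ * t ^ 2 / 2)))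
    {a : ℝ} (ha : 0 ≤ a) (haσ : a * σ < 1) :
    ∫⁻ ω, ENNReal.ofReal (rexp (a * S ω ^ 2 / 2)) ∂ν
      ≤ ENNReal.ofReal ((1 - a * σ) ^ (-(1 : ℝ) / 2)) := by
  have hlin : ∀ ω, ENNReal.ofReal (rexp (a * S ω ^ 2 / 2))
      = ∫⁻ u, ENNReal.ofReal (rexp ((√a * S ω) * u)) ∂gaussianReal 0 1 := fun ω => by
    rw [lintegral_ofReal_exp_mul_gaussianReal]
    congr 2
    rw [mul_pow, sq_sqrt ha]
    push_cast
    ring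
  calc ∫⁻ ω, ENNReal.ofReal (rexp (a * S ω ^ 2 / 2)) ∂ν
      = ∫⁻ u, ∫⁻ ω, ENNReal.ofReal (rexp ((√a * u) * S ω)) ∂ν ∂gaussianReal 0 1 := by
        simp_rw [hlin, mul_right_comm √a]
        exact lintegral_lintegral_swap (by fun_prop)
    _ ≤ ∫⁻ u, ENNReal.ofReal (rexp ((a * σ) * u ^ 2 / 2)) ∂gaussianReal 0 1 := by
        refine lintegral_mono fun u => (hν _).trans_eq ?_
        rw [mul_pow, sq_sqrt ha]
        ring_nf
    _ = ENNReal.ofReal ((1 - a * σ) ^ (-(1 : ℝ) / 2)) :=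
        lintegral_ofReal_exp_mul_sq_gaussianReal haσ

end ProbabilityTheory

open ProbabilityTheory

theorem exp_moment_bound_of_block_average_subgaussian_general
    (μ : Measure ℝ) [IsProbabilityMeasure μ]
    (C₂ : ℝ)
    (hΛ : ∀ lam : ℝ,
      ∫⁻ x, ENNReal.ofReal (Real.exp (lam * x)) ∂μ
        ≤ ENNReal.ofReal (Real.exp (C₂ * lam ^ 2 / 2)))
    (C₁ : ℝ) (G : ℝ → ℝ)
    (hG_nonneg : ∀ x, 0 ≤ G x)
    (hG_bound : ∀ x, G x ≤ C₁ * (x ^ 2 / 2)) :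
    ∀ γ : ℝ, 0 < γ → γ < (C₁ * C₂)⁻¹ → ∀ l : ℕ, 1 ≤ l →
      ∫⁻ z : Fin l → ℝ,
          ENNReal.ofReal (Real.exp (γ * l * G ((∑ i, z i) / l)))
          ∂(Measure.pi fun _ : Fin l => μ)
        ≤ ENNReal.ofReal ((1 - γ * C₁ * C₂) ^ (-(1 : ℝ) / 2)) := by
  intro γ hγ hγC l hl
  have hl₀ : (l : ℝ) ≠ 0 := by positivity
  have hC₁ : 0 ≤ C₁ := by nlinarith [(hG_nonneg 1).trans (hG_bound 1)]
  have hC₁C₂ : 0 < C₁ * C₂ := by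
    by_contra! h
    exact (inv_nonpos.mpr h).not_gt (hγ.trans hγC)
  have hc : γ * C₁ * C₂ < 1 := by
    rw [mul_assoc]
    exact (lt_inv_mul_iff₀' hC₁C₂).mp (by rwa [mul_one])
  have hpointwise : ∀ z : Fin l → ℝ,
      γ * l * G ((∑ i, z i) / l) ≤ γ * C₁ / l * (∑ i, z i) ^ 2 / 2 := fun z => by
    calc γ * l * G ((∑ i, z i) / l) ≤ γ * l * (C₁ * (((∑ i, z i) / l) ^ 2 / 2)) := by
          gcongr; exact hG_bound _
      _ = γ * C₁ / l * (∑ i, z i) ^ 2 / 2 := by field_simp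
  calc _ ≤ ∫⁻ z : Fin l → ℝ, ENNReal.ofReal (rexp (γ * C₁ / l * (∑ i, z i) ^ 2 / 2))
          ∂(Measure.pi fun _ : Fin l => μ) :=
        lintegral_mono fun z => ENNReal.ofReal_le_ofReal (exp_le_exp.mpr (hpointwise z))
    _ ≤ _ := by
        have h := lintegral_ofReal_exp_mul_sq_le (ν := Measure.pi fun _ : Fin l => μ)
          (Finset.measurable_sum _ fun i _ => measurable_pi_apply i)
          (lintegral_ofReal_exp_mul_sum_le μ hΛ) (a := γ * C₁ / l) (by positivity)
        have haσ : γ * C₁ / l * (Fintype.card (Fin l) * C₂) = γ * C₁ * C₂ := by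
          rw [Fintype.card_fin]; field_simp
        rw [haσ] at h
        exact h hc

/-- Sub-Gaussian case of Lemma 2. -/
theorem exp_moment_bound_of_block_average_subgaussian
    (μ : Measure ℝ) [IsProbabilityMeasure μ]
    (hmean : ∫ x, x ∂μ = 0)
    (C₂ : ℝ)
    (hΛ : ∀ lam : ℝ,
      ∫⁻ x, ENNReal.ofReal (Real.exp (lam * x)) ∂μ
        ≤ ENNReal.ofReal (Real.exp (C₂ * lam ^ 2 / 2)))
    (C₁ : ℝ) (G : ℝ → ℝ) (hG_meas : Measurable G)
    (hG_nonneg : ∀ x, 0 ≤ G x)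
    (hG_bound : ∀ x, G x ≤ C₁ * (x ^ 2 / 2)) :
    ∀ γ : ℝ, 0 < γ → γ < (C₁ * C₂)⁻¹ → ∀ l : ℕ, 1 ≤ l →
      ∫⁻ z : Fin l → ℝ,
          ENNReal.ofReal (Real.exp (γ * l * G ((∑ i, z i) / l)))
          ∂(Measure.pi fun _ : Fin l => μ)
        ≤ ENNReal.ofReal ((1 - γ * C₁ * C₂) ^ (-(1 : ℝ) / 2)) :=
  exp_moment_bound_of_block_average_subgaussian_general μ C₂ hΛ C₁ G hG_nonneg hG_bound
end

section
/- Dirichlet form convexity inequality. For every N ∈ ℕ, every l with 2 ≤ l ≤ N, and every probability measure μ on Ω^N with density h^N = dμ/dπ^N, letting h^{N,l,j} denote the density with respect to π^l of the marginal of μ on the window (z_j, z_{j+1}, …, z_{j+l−1}) (indices mod N), one has D^N(√(h^N)) ≥ (1/l) Σ_{j∈T^N} D^l(√(h^{N,l,j})). -/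
open Real
open scoped BigOperators Classical

noncomputable section

/-- The single-site spin space `S = [z_min, z_max] ∩ ℤ`. -/
abbrev Spin (zmin zmax : ℤ) := {x : ℤ // x ∈ Finset.Icc zmin zmax}

/-- The exchange move `Θ`: move one unit from site `a` to site `b`
(if possible; otherwise do nothing). -/
def moveB {zmin zmax : ℤ} {ι : Type*} [DecidableEq ι] (a b : ι)
    (z : ι → Spin zmin zmax) : ι → Spin zmin zmax :=
  if h : zmin < (z a : ℤ) ∧ (z b : ℤ) < zmax then
    fun i =>
      ⟨(z i : ℤ) - (if i = a then 1 else 0) + (if i = b then 1 else 0), by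
        obtain ⟨h1, h2⟩ := h
        have hz := Finset.mem_Icc.mp (z i).2
        rw [Finset.mem_Icc]
        by_cases hia : i = a <;> by_cases hib : i = b <;> subst_vars <;> simp_all <;> omega⟩
  else z

/-- Product measure on configurations indexed by a fintype. -/
def prodMeas {zmin zmax : ℤ} {ι : Type*} [Fintype ι] (ρ : ℤ → ℝ)
    (z : ι → Spin zmin zmax) : ℝ :=
  ∏ i, ρ (z i)

/-- Dirichlet form on the torus (periodic boundary conditions). -/
def dirichletN (zmin zmax : ℤ) (c : ℤ → ℤ → ℝ) (ρ : ℤ → ℝ) (N : ℕ) [NeZero N]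
    (f : (ZMod N → Spin zmin zmax) → ℝ) : ℝ :=
  (1 / 2) * ∑ j : ZMod N, ∑ z : ZMod N → Spin zmin zmax,
    prodMeas ρ z * c (z j) (z (j + 1)) * (f (moveB j (j + 1) z) - f z) ^ 2

open Fin.NatCast in
/-- Dirichlet form on a block of length `l` (free boundary conditions). -/
def dirichletL (zmin zmax : ℤ) (c : ℤ → ℤ → ℝ) (ρ : ℤ → ℝ) (l : ℕ) [NeZero l]
    (g : (Fin l → Spin zmin zmax) → ℝ) : ℝ :=
  (1 / 2) * ∑ i ∈ Finset.range (l - 1), ∑ y : Fin l → Spin zmin zmax,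
    prodMeas ρ y * c (y ((i : ℕ) : Fin l)) (y (((i + 1 : ℕ)) : Fin l)) *
      (g (moveB ((i : ℕ) : Fin l) (((i + 1 : ℕ)) : Fin l) y) - g y) ^ 2

/-- The marginal of `μ` on the window `(z_j, …, z_{j+l-1})`. -/
def windowMarginal (zmin zmax : ℤ) (N : ℕ) [NeZero N] (l : ℕ)
    (μ : (ZMod N → Spin zmin zmax) → ℝ) (j : ZMod N)
    (y : Fin l → Spin zmin zmax) : ℝ :=
  ∑ z ∈ Finset.univ.filter
      (fun z : ZMod N → Spin zmin zmax => ∀ i : Fin l, z (j + ((i : ℕ) : ZMod N)) = y i),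
    μ z

/-!
Both Dirichlet forms are sums of bond energies, so it suffices to compare the bond `(i, i + 1)`
of the window at `j` with the torus bond `(j + i, j + i + 1)`. Group the torus configurations
into fibres of the restriction to the window. The move `Θ` maps the fibre over `y` bijectively
onto the fibre over `Θ y`, and `π(z) / π(Θ z)` only depends on the two spins at the bond, so it
equals `π(y) / π(Θ y)` on the whole fibre. Hence the window energy at `y` has the form
`c (√(∑ u) - √(∑ v))²` and the torus energy over its fibre is `c ∑ (√u - √v)²`; the first is
smaller by Cauchy–Schwarz. Every torus bond is an inner bond of exactly `l - 1` windows, so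
`∑ⱼ Dˡ ≤ (l - 1) Dᴺ`.
-/

open Finset Function

section Sqrt

lemma sqrt_sum_sub_sqrt_sum_sq_le {α : Type*} (s : Finset α) {u v : α → ℝ}
    (hu : ∀ i, 0 ≤ u i) (hv : ∀ i, 0 ≤ v i) :
    (√(∑ i ∈ s, u i) - √(∑ i ∈ s, v i)) ^ 2 ≤ ∑ i ∈ s, (√(u i) - √(v i)) ^ 2 := by
  have hexpand : ∀ {p q : ℝ}, 0 ≤ p → 0 ≤ q → (√p - √q) ^ 2 = p + q - 2 * (√p * √q) := by
    intro p q hp hq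
    rw [sub_sq, sq_sqrt hp, sq_sqrt hq]
    ring
  rw [hexpand (sum_nonneg fun i _ => hu i) (sum_nonneg fun i _ => hv i),
    sum_congr rfl fun i _ => hexpand (hu i) (hv i), sum_sub_distrib, sum_add_distrib, ← mul_sum]
  linarith [Real.sum_sqrt_mul_sqrt_le s hu hv]

lemma mul_sq_sqrt_div_sub_sqrt_div {p q w w' : ℝ} (hw : 0 < w) :
    w * (√(p / w') - √(q / w)) ^ 2 = (√(p * (w / w')) - √q) ^ 2 := by
  calc w * (√(p / w') - √(q / w)) ^ 2 = (√w * √(p / w') - √w * √(q / w)) ^ 2 := by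
        rw [← mul_sub, mul_pow, sq_sqrt hw.le]
    _ = (√(p * (w / w')) - √q) ^ 2 := by
        rw [← sqrt_mul hw.le, ← sqrt_mul hw.le, mul_div_cancel₀ q hw.ne', mul_div_left_comm]

end Sqrt

section Moves

variable {zmin zmax : ℤ} {ι κ : Type*}

def CanMove (a b : ι) (z : ι → Spin zmin zmax) : Prop :=
  zmin < (z a : ℤ) ∧ (z b : ℤ) < zmax

variable [DecidableEq ι] {a b : ι} {z : ι → Spin zmin zmax}

lemma moveB_apply_of_canMove (h : CanMove a b z) (i : ι) :
    (moveB a b z i : ℤ) = z i - (if i = a then 1 else 0) + (if i = b then 1 else 0) := by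
  have h' : zmin < (z a : ℤ) ∧ (z b : ℤ) < zmax := h
  rw [moveB, dif_pos h']

lemma moveB_of_not_canMove (h : ¬CanMove a b z) : moveB a b z = z :=
  dif_neg h

lemma moveB_apply_of_ne {i : ι} (ha : i ≠ a) (hb : i ≠ b) : moveB a b z i = z i := by
  unfold moveB
  split
  · exact Subtype.ext (by simp [ha, hb])
  · rfl

lemma canMove_moveB (h : CanMove a b z) : CanMove b a (moveB a b z) := by
  have ha := mem_Icc.mp (z a).2
  have hb := mem_Icc.mp (z b).2
  unfold CanMove at h ⊢
  rw [moveB_apply_of_canMove h, moveB_apply_of_canMove h]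
  by_cases hab : a = b
  · subst hab
    simp only [if_true]
    omega
  · simp only [if_true, if_neg hab, if_neg (Ne.symm hab)]
    omega

lemma moveB_moveB (h : CanMove a b z) : moveB b a (moveB a b z) = z := by
  funext i
  apply Subtype.ext
  rw [moveB_apply_of_canMove (canMove_moveB h), moveB_apply_of_canMove h]
  ring

lemma moveB_comp [DecidableEq κ] {e : κ → ι} (he : Injective e) (a b : κ)
    (z : ι → Spin zmin zmax) : moveB (e a) (e b) z ∘ e = moveB a b (z ∘ e) := by
  by_cases h : CanMove a b (z ∘ e)
  · funext k
    apply Subtype.ext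
    rw [comp_apply, moveB_apply_of_canMove h, moveB_apply_of_canMove (a := e a) (b := e b) h]
    simp [he.eq_iff]
  · rw [moveB_of_not_canMove h, moveB_of_not_canMove (a := e a) (b := e b) h]

end Moves

section ProductMeasure

variable {zmin zmax : ℤ} {ι κ : Type*} [Fintype ι] {ρ : ℤ → ℝ}

lemma prodMeas_pos (hρ : ∀ x ∈ Icc zmin zmax, 0 < ρ x) (z : ι → Spin zmin zmax) :
    0 < prodMeas ρ z :=
  prod_pos fun i _ => hρ _ (z i).2

variable [DecidableEq ι] [Fintype κ]

lemma prodMeas_eq_prodMeas_comp_mul {e : κ → ι} (he : Injective e) (ρ : ℤ → ℝ)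
    (z : ι → Spin zmin zmax) :
    prodMeas ρ z = prodMeas ρ (z ∘ e) * ∏ i ∈ (univ.image e)ᶜ, ρ (z i) := by
  rw [prodMeas, prodMeas, ← prod_mul_prod_compl (univ.image e), prod_image he.injOn]
  rfl

lemma prodMeas_div_prodMeas_moveB [DecidableEq κ] (hρ : ∀ x ∈ Icc zmin zmax, 0 < ρ x)
    {e : κ → ι} (he : Injective e) (a b : κ) (z : ι → Spin zmin zmax) :
    prodMeas ρ z / prodMeas ρ (moveB (e a) (e b) z)
      = prodMeas ρ (z ∘ e) / prodMeas ρ (moveB a b (z ∘ e)) := by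
  have hfar : ∀ i ∈ (univ.image e)ᶜ, ρ (moveB (e a) (e b) z i) = ρ (z i) := by
    intro i hi
    have hi' : ∀ k, e k ≠ i := by simpa using hi
    rw [moveB_apply_of_ne (hi' a).symm (hi' b).symm]
  rw [prodMeas_eq_prodMeas_comp_mul he ρ z, prodMeas_eq_prodMeas_comp_mul he ρ (moveB _ _ z),
    moveB_comp he, prod_congr rfl hfar,
    mul_div_mul_right _ _ (prod_pos fun i _ => hρ _ (z i).2).ne']

end ProductMeasure

section Marginal

variable {zmin zmax : ℤ} {ι κ : Type*} [Fintype ι] [DecidableEq ι] [Fintype κ] [DecidableEq κ]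

def marginal (e : κ → ι) (μ : (ι → Spin zmin zmax) → ℝ) (y : κ → Spin zmin zmax) : ℝ :=
  ∑ z with z ∘ e = y, μ z

lemma sum_fiber_moveB {e : κ → ι} (he : Injective e) {a b : κ} {y : κ → Spin zmin zmax}
    (hy : CanMove a b y) (μ : (ι → Spin zmin zmax) → ℝ) :
    ∑ z with z ∘ e = y, μ (moveB (e a) (e b) z) = marginal e μ (moveB a b y) := by
  refine sum_nbij' (moveB (e a) (e b)) (moveB (e b) (e a)) ?_ ?_ ?_ ?_ fun _ _ => rfl
  · intro z hz
    simp only [mem_filter, mem_univ, true_and] at hz ⊢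
    rw [moveB_comp he, hz]
  · intro z hz
    simp only [mem_filter, mem_univ, true_and] at hz ⊢
    rw [moveB_comp he, hz, moveB_moveB hy]
  · intro z hz
    simp only [mem_filter, mem_univ, true_and] at hz
    subst hz
    exact moveB_moveB (a := e a) (b := e b) hy
  · intro z hz
    simp only [mem_filter, mem_univ, true_and] at hz
    have hz' : CanMove (e b) (e a) z := by
      have := canMove_moveB hy
      rwa [← hz] at this
    exact moveB_moveB hz'

end Marginal

section BondEnergy

variable {zmin zmax : ℤ} {ι κ : Type*} [Fintype ι] [DecidableEq ι] {ρ : ℤ → ℝ} {c : ℤ → ℤ → ℝ}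

def bondEnergy (ρ : ℤ → ℝ) (c : ℤ → ℤ → ℝ) (a b : ι) (f : (ι → Spin zmin zmax) → ℝ) : ℝ :=
  ∑ z, prodMeas ρ z * c (z a) (z b) * (f (moveB a b z) - f z) ^ 2

lemma bondEnergy_nonneg (hc : ∀ x ∈ Icc zmin zmax, ∀ y ∈ Icc zmin zmax, 0 ≤ c x y)
    (hρ : ∀ x ∈ Icc zmin zmax, 0 ≤ ρ x) (a b : ι) (f : (ι → Spin zmin zmax) → ℝ) :
    0 ≤ bondEnergy ρ c a b f :=
  sum_nonneg fun z _ =>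
    mul_nonneg (mul_nonneg (prod_nonneg fun i _ => hρ _ (z i).2) (hc _ (z a).2 _ (z b).2))
      (sq_nonneg _)

variable [Fintype κ] [DecidableEq κ]

lemma bondEnergy_term_le_sum_fiber (hc : ∀ x ∈ Icc zmin zmax, ∀ y ∈ Icc zmin zmax, 0 ≤ c x y)
    (hρ : ∀ x ∈ Icc zmin zmax, 0 < ρ x) {e : κ → ι} (he : Injective e) (a b : κ)
    {μ : (ι → Spin zmin zmax) → ℝ} (hμ : ∀ z, 0 ≤ μ z) (y : κ → Spin zmin zmax) :
    prodMeas ρ y * c (y a) (y b) *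
        (√(marginal e μ (moveB a b y) / prodMeas ρ (moveB a b y))
          - √(marginal e μ y / prodMeas ρ y)) ^ 2
      ≤ ∑ z with z ∘ e = y, prodMeas ρ z * c (z (e a)) (z (e b)) *
        (√(μ (moveB (e a) (e b) z) / prodMeas ρ (moveB (e a) (e b) z))
          - √(μ z / prodMeas ρ z)) ^ 2 := by
  by_cases hy : CanMove a b y
  · set r := prodMeas ρ y / prodMeas ρ (moveB a b y)
    have hfiber : ∀ z ∈ ({z | z ∘ e = y} : Finset _),
        prodMeas ρ z * c (z (e a)) (z (e b)) *
          (√(μ (moveB (e a) (e b) z) / prodMeas ρ (moveB (e a) (e b) z))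
            - √(μ z / prodMeas ρ z)) ^ 2
        = c (y a) (y b) * (√(μ (moveB (e a) (e b) z) * r) - √(μ z)) ^ 2 := by
      intro z hz
      obtain rfl := (mem_filter.mp hz).2
      rw [mul_right_comm, mul_sq_sqrt_div_sub_sqrt_div (prodMeas_pos hρ z),
        prodMeas_div_prodMeas_moveB hρ he]
      exact mul_comm _ _
    rw [sum_congr rfl hfiber, ← mul_sum, mul_right_comm,
      mul_sq_sqrt_div_sub_sqrt_div (prodMeas_pos hρ y), ← sum_fiber_moveB he hy, sum_mul, mul_comm]
    exact mul_le_mul_of_nonneg_left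
      (sqrt_sum_sub_sqrt_sum_sq_le _
        (fun z => mul_nonneg (hμ _) (div_nonneg (prodMeas_pos hρ _).le (prodMeas_pos hρ _).le))
        hμ)
      (hc _ (y a).2 _ (y b).2)
  · rw [moveB_of_not_canMove hy, sub_self, zero_pow two_ne_zero, mul_zero]
    exact sum_nonneg fun z _ =>
      mul_nonneg (mul_nonneg (prodMeas_pos hρ z).le (hc _ (z (e a)).2 _ (z (e b)).2))
        (sq_nonneg _)

theorem bondEnergy_sqrt_marginal_le (hc : ∀ x ∈ Icc zmin zmax, ∀ y ∈ Icc zmin zmax, 0 ≤ c x y)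
    (hρ : ∀ x ∈ Icc zmin zmax, 0 < ρ x) {e : κ → ι} (he : Injective e) (a b : κ)
    {μ : (ι → Spin zmin zmax) → ℝ} (hμ : ∀ z, 0 ≤ μ z) :
    bondEnergy ρ c a b (fun y => √(marginal e μ y / prodMeas ρ y))
      ≤ bondEnergy ρ c (e a) (e b) (fun z => √(μ z / prodMeas ρ z)) := by
  rw [bondEnergy, bondEnergy, ← sum_fiberwise univ (· ∘ e)]
  exact sum_le_sum fun y _ => bondEnergy_term_le_sum_fiber hc hρ he a b hμ y

end BondEnergy

section Torus

lemma window_injective {N l : ℕ} (hlN : l ≤ N) (j : ZMod N) :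
    Injective fun i : Fin l => j + ((i : ℕ) : ZMod N) := by
  intro i₁ i₂ h
  have h' := (ZMod.natCast_eq_natCast_iff' _ _ _).mp (add_left_cancel h)
  rwa [Nat.mod_eq_of_lt (i₁.2.trans_le hlN), Nat.mod_eq_of_lt (i₂.2.trans_le hlN),
    Fin.val_inj] at h'

variable {zmin zmax : ℤ} {c : ℤ → ℤ → ℝ} {ρ : ℤ → ℝ} {N : ℕ} [NeZero N] {l : ℕ}

lemma dirichletN_eq_sum_bondEnergy (f : (ZMod N → Spin zmin zmax) → ℝ) :
    dirichletN zmin zmax c ρ N f = 1 / 2 * ∑ j, bondEnergy ρ c j (j + 1) f :=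
  rfl

open Fin.NatCast in
lemma dirichletL_eq_sum_bondEnergy [NeZero l] (g : (Fin l → Spin zmin zmax) → ℝ) :
    dirichletL zmin zmax c ρ l g
      = 1 / 2 * ∑ i ∈ range (l - 1), bondEnergy ρ c (i : Fin l) ((i + 1 : ℕ) : Fin l) g :=
  rfl

lemma windowMarginal_eq_marginal (μ : (ZMod N → Spin zmin zmax) → ℝ) (j : ZMod N) :
    windowMarginal zmin zmax N l μ j = marginal (fun i : Fin l => j + ((i : ℕ) : ZMod N)) μ := by
  funext y
  simp only [windowMarginal, marginal, funext_iff, comp_apply]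

open Fin.NatCast in
lemma bondEnergy_window_le [NeZero l]
    (hc : ∀ x ∈ Icc zmin zmax, ∀ y ∈ Icc zmin zmax, 0 ≤ c x y)
    (hρ : ∀ x ∈ Icc zmin zmax, 0 < ρ x) (hlN : l ≤ N)
    {μ : (ZMod N → Spin zmin zmax) → ℝ} (hμ : ∀ z, 0 ≤ μ z) (j : ZMod N) {i : ℕ}
    (hi : i + 1 < l) :
    bondEnergy ρ c (i : Fin l) ((i + 1 : ℕ) : Fin l)
        (fun y => √(windowMarginal zmin zmax N l μ j y / prodMeas ρ y))
      ≤ bondEnergy ρ c (j + i) (j + i + 1) (fun z => √(μ z / prodMeas ρ z)) := by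
  have h := bondEnergy_sqrt_marginal_le hc hρ (window_injective hlN j) (i : Fin l)
    ((i + 1 : ℕ) : Fin l) hμ
  rwa [← windowMarginal_eq_marginal, Fin.val_cast_of_lt (by omega), Fin.val_cast_of_lt hi,
    Nat.cast_add_one (R := ZMod N), ← add_assoc] at h

lemma dirichletN_nonneg (hc : ∀ x ∈ Icc zmin zmax, ∀ y ∈ Icc zmin zmax, 0 ≤ c x y)
    (hρ : ∀ x ∈ Icc zmin zmax, 0 ≤ ρ x) (f : (ZMod N → Spin zmin zmax) → ℝ) :
    0 ≤ dirichletN zmin zmax c ρ N f := by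
  rw [dirichletN_eq_sum_bondEnergy]
  exact mul_nonneg (by norm_num) (sum_nonneg fun j _ => bondEnergy_nonneg hc hρ _ _ f)

lemma sum_dirichletL_window_le [NeZero l]
    (hc : ∀ x ∈ Icc zmin zmax, ∀ y ∈ Icc zmin zmax, 0 ≤ c x y)
    (hρ : ∀ x ∈ Icc zmin zmax, 0 < ρ x) (hlN : l ≤ N)
    {μ : (ZMod N → Spin zmin zmax) → ℝ} (hμ : ∀ z, 0 ≤ μ z) :
    ∑ j : ZMod N, dirichletL zmin zmax c ρ l
        (fun y => √(windowMarginal zmin zmax N l μ j y / prodMeas ρ y))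
      ≤ (l - 1 : ℕ) * dirichletN zmin zmax c ρ N (fun z => √(μ z / prodMeas ρ z)) := by
  set T : ZMod N → ℝ := fun k => bondEnergy ρ c k (k + 1) (fun z => √(μ z / prodMeas ρ z))
  have hshift (i : ℕ) : ∑ j : ZMod N, T (j + i) = ∑ k, T k :=
    Fintype.sum_equiv (Equiv.addRight (i : ZMod N)) _ T fun _ => rfl
  simp only [dirichletL_eq_sum_bondEnergy, dirichletN_eq_sum_bondEnergy, ← mul_sum]
  calc 1 / 2 * ∑ j : ZMod N, ∑ i ∈ range (l - 1), _
      ≤ 1 / 2 * ∑ j : ZMod N, ∑ i ∈ range (l - 1), T (j + i) := by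
        gcongr with j _ i hi
        exact bondEnergy_window_le hc hρ hlN hμ j (by simp only [mem_range] at hi; omega)
    _ = (l - 1 : ℕ) * (1 / 2 * ∑ k, T k) := by
        rw [sum_comm, sum_congr rfl fun i _ => hshift i, sum_const, card_range, nsmul_eq_mul]
        ring

end Torus

theorem dirichlet_form_convexity_general
    (zmin zmax : ℤ)
    (c : ℤ → ℤ → ℝ)
    (hc_nonneg : ∀ x ∈ Finset.Icc zmin zmax, ∀ y ∈ Finset.Icc zmin zmax, 0 ≤ c x y)
    (ρ : ℤ → ℝ) (hρ_pos : ∀ x ∈ Finset.Icc zmin zmax, 0 < ρ x)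
    (N : ℕ) [NeZero N] (l : ℕ) [NeZero l] (hlN : l ≤ N)
    (μ : (ZMod N → Spin zmin zmax) → ℝ)
    (hμ_nonneg : ∀ z, 0 ≤ μ z) :
    dirichletN zmin zmax c ρ N (fun z => Real.sqrt (μ z / prodMeas ρ z))
      ≥ (1 / (l : ℝ)) * ∑ j : ZMod N,
          dirichletL zmin zmax c ρ l
            (fun y => Real.sqrt (windowMarginal zmin zmax N l μ j y / prodMeas ρ y)) := by
  set D := dirichletN zmin zmax c ρ N (fun z => √(μ z / prodMeas ρ z))
  have hD : 0 ≤ D := dirichletN_nonneg hc_nonneg (fun x hx => (hρ_pos x hx).le) _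
  have hl : ((l - 1 : ℕ) : ℝ) / l ≤ 1 :=
    div_le_one_of_le₀ (by exact_mod_cast l.sub_le 1) (Nat.cast_nonneg l)
  calc (1 / l : ℝ) * ∑ j : ZMod N, _
      ≤ 1 / l * ((l - 1 : ℕ) * D) := by
        gcongr
        exact sum_dirichletL_window_le hc_nonneg hρ_pos hlN hμ_nonneg
    _ = ((l - 1 : ℕ) / l : ℝ) * D := by ring
    _ ≤ D := mul_le_of_le_one_left hD hl

/-- Dirichlet form convexity inequality. -/
theorem dirichlet_form_convexity
    (zmin zmax : ℤ) (hzz : zmin < zmax)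
    (c : ℤ → ℤ → ℝ)
    (hc_nonneg : ∀ x ∈ Finset.Icc zmin zmax, ∀ y ∈ Finset.Icc zmin zmax, 0 ≤ c x y)
    (ρ : ℤ → ℝ) (hρ_pos : ∀ x ∈ Finset.Icc zmin zmax, 0 < ρ x)
    (hρ_sum : ∑ x ∈ Finset.Icc zmin zmax, ρ x = 1)
    (N : ℕ) [NeZero N] (l : ℕ) [NeZero l] (hl : 2 ≤ l) (hlN : l ≤ N)
    (μ : (ZMod N → Spin zmin zmax) → ℝ)
    (hμ_nonneg : ∀ z, 0 ≤ μ z) (hμ_sum : ∑ z, μ z = 1) :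
    dirichletN zmin zmax c ρ N (fun z => Real.sqrt (μ z / prodMeas ρ z))
      ≥ (1 / (l : ℝ)) * ∑ j : ZMod N,
          dirichletL zmin zmax c ρ l
            (fun y => Real.sqrt (windowMarginal zmin zmax N l μ j y / prodMeas ρ y)) :=
  dirichlet_form_convexity_general zmin zmax c hc_nonneg ρ hρ_pos N l hlN μ hμ_nonneg
end
end

section
/- Exact formula for L^{N*}f/f for a tilted product measure. Let θ̃ : T^N → ℝ be arbitrary, let ν = Π_{j∈T^N} π_{θ̃(j)} and f = dν/dπ^N (a strictly positive function on Ω^N). Then for every z ∈ Ω^N: (L^{N*} f)(z) / f(z) = Σ_{j∈T^N} ( e^{θ̃(j) − θ̃(j+1)} − 1 ) c(z_{j+1}, z_j). -/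
open Real
open scoped BigOperators Classical

noncomputable section

/-- Log-moment generating function `F` of the single-site measure `p`. -/
def Ffun (zmin zmax : ℤ) (p : ℤ → ℝ) (θ : ℝ) : ℝ :=
  Real.log (∑ z ∈ Finset.Icc zmin zmax, Real.exp (θ * (z : ℝ)) * p z)

/-- Tilted single-site measure `π_θ`. -/
def spiTilt (zmin zmax : ℤ) (p : ℤ → ℝ) (θ : ℝ) (x : ℤ) : ℝ :=
  p x * Real.exp (θ * (x : ℝ) - Ffun zmin zmax p θ)

/-- The reversed generator `L^{N*}`: the elementary movements are
`(z_{j-1}, z_j) → (z_{j-1}+1, z_j−1)` with rate `c(z_j, z_{j-1})`. -/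
def LstarApply (zmin zmax : ℤ) (c : ℤ → ℤ → ℝ) (N : ℕ) [NeZero N]
    (g : (ZMod N → Spin zmin zmax) → ℝ) (z : ZMod N → Spin zmin zmax) : ℝ :=
  ∑ j : ZMod N, c (z j) (z (j - 1)) * (g (moveB j (j - 1) z) - g z)

/-!
The density `f = dν/dπ^N` is the exponential `exp (∑ᵢ (θ̃ i - θ₀) zᵢ - C)` of a linear function of
the configuration, since the weights `p(zᵢ)` cancel site by site. A move of one unit from site `j`
to site `j - 1` therefore multiplies `f` by `exp (θ̃ (j - 1) - θ̃ j)`, and condition (A) guarantees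
that every move with a nonzero rate is actually performed. Hence `L^{N*} f = (∑ⱼ (e^{θ̃(j-1) - θ̃ j} - 1)
c(zⱼ, z_{j-1})) f`, and shifting the summation index by one gives the formula.
-/

section Tilt

variable {zmin zmax : ℤ}

theorem spiTilt_div_spiTilt (p : ℤ → ℝ) (θ θ₀ : ℝ) {x : ℤ} (hx : p x ≠ 0) :
    spiTilt zmin zmax p θ x / spiTilt zmin zmax p θ₀ x
      = Real.exp ((θ - θ₀) * x - (Ffun zmin zmax p θ - Ffun zmin zmax p θ₀)) := by
  rw [spiTilt, spiTilt, mul_div_mul_left _ _ hx, ← Real.exp_sub]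
  ring_nf

theorem prod_spiTilt_div_prod_spiTilt {ι : Type*} [Fintype ι] (p : ℤ → ℝ)
    (hp_pos : ∀ x ∈ Finset.Icc zmin zmax, 0 < p x) (θ : ι → ℝ) (θ₀ : ℝ)
    (z : ι → Spin zmin zmax) :
    (∏ i, spiTilt zmin zmax p (θ i) (z i)) / (∏ i, spiTilt zmin zmax p θ₀ (z i))
      = Real.exp ((∑ i, (θ i - θ₀) * (z i : ℤ))
          - ∑ i, (Ffun zmin zmax p (θ i) - Ffun zmin zmax p θ₀)) := by
  rw [← Finset.prod_div_distrib, ← Finset.sum_sub_distrib, Real.exp_sum]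
  exact Finset.prod_congr rfl fun i _ ↦ spiTilt_div_spiTilt p _ _ (hp_pos _ (z i).2).ne'

end Tilt

theorem moveB_allowed_of_rate_ne_zero {zmin zmax : ℤ} {ι : Type*} {c : ℤ → ℤ → ℝ}
    (hA₁ : ∀ y ∈ Finset.Icc zmin zmax, c zmin y = 0)
    (hA₂ : ∀ x ∈ Finset.Icc zmin zmax, c x zmax = 0)
    {z : ι → Spin zmin zmax} {a b : ι} (hc : c (z a) (z b) ≠ 0) :
    zmin < (z a : ℤ) ∧ (z b : ℤ) < zmax := by
  have ha := Finset.mem_Icc.mp (z a).2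
  have hb := Finset.mem_Icc.mp (z b).2
  refine ⟨lt_of_le_of_ne ha.1 fun h ↦ hc ?_, lt_of_le_of_ne hb.2 fun h ↦ hc ?_⟩
  · rw [← h]; exact hA₁ _ (z b).2
  · rw [h]; exact hA₂ _ (z a).2

section Move

variable {zmin zmax : ℤ} {ι : Type*} [DecidableEq ι]

theorem moveB_apply_of_allowed {a b : ι} {z : ι → Spin zmin zmax}
    (h : zmin < (z a : ℤ) ∧ (z b : ℤ) < zmax) (i : ι) :
    (moveB a b z i : ℤ) = z i - (if i = a then 1 else 0) + (if i = b then 1 else 0) := by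
  simp only [moveB, dif_pos h]

theorem sum_mul_moveB_of_allowed [Fintype ι] (w : ι → ℝ) {a b : ι} {z : ι → Spin zmin zmax}
    (h : zmin < (z a : ℤ) ∧ (z b : ℤ) < zmax) :
    ∑ i, w i * (moveB a b z i : ℤ) = ∑ i, w i * (z i : ℤ) + (w b - w a) := by
  simp only [moveB_apply_of_allowed h, Int.cast_add, Int.cast_sub, apply_ite Int.cast,
    Int.cast_one, Int.cast_zero, mul_add, mul_sub, Finset.sum_add_distrib, Finset.sum_sub_distrib,
    mul_ite, mul_one, mul_zero, Finset.sum_ite_eq', Finset.mem_univ, if_true]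
  ring

end Move

theorem LstarApply_eq_mul_of_moveB {zmin zmax : ℤ} {c : ℤ → ℤ → ℝ} {N : ℕ} [NeZero N]
    {g : (ZMod N → Spin zmin zmax) → ℝ} {z : ZMod N → Spin zmin zmax} (r : ZMod N → ℝ)
    (hr : ∀ j, c (z j) (z (j - 1)) ≠ 0 → g (moveB j (j - 1) z) = r j * g z) :
    LstarApply zmin zmax c N g z = (∑ j, (r j - 1) * c (z j) (z (j - 1))) * g z := by
  rw [LstarApply, Finset.sum_mul]
  refine Finset.sum_congr rfl fun j _ ↦ ?_
  by_cases hc : c (z j) (z (j - 1)) = 0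
  · simp [hc]
  · rw [hr j hc]; ring

theorem reversed_generator_formula_for_tilted_product_general
    (zmin zmax : ℤ)
    (c : ℤ → ℤ → ℝ)
    (hA₁ : ∀ y ∈ Finset.Icc zmin zmax, c zmin y = 0)
    (hA₂ : ∀ x ∈ Finset.Icc zmin zmax, c x zmax = 0)
    (p : ℤ → ℝ) (hp_pos : ∀ x ∈ Finset.Icc zmin zmax, 0 < p x)
    (θ₀ : ℝ) (N : ℕ) [NeZero N]
    (θt : ZMod N → ℝ)
    (f : (ZMod N → Spin zmin zmax) → ℝ)
    (hf : f = fun z =>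
      (∏ j : ZMod N, spiTilt zmin zmax p (θt j) (z j)) /
        (∏ j : ZMod N, spiTilt zmin zmax p θ₀ (z j))) :
    ∀ z : ZMod N → Spin zmin zmax,
      LstarApply zmin zmax c N f z / f z
        = ∑ j : ZMod N, (Real.exp (θt j - θt (j + 1)) - 1) * c (z (j + 1)) (z j) := by
  intro z
  set C := ∑ i, (Ffun zmin zmax p (θt i) - Ffun zmin zmax p θ₀)
  have hf_exp : ∀ w, f w = Real.exp ((∑ i, (θt i - θ₀) * (w i : ℤ)) - C) := fun w ↦ by
    rw [hf]; exact prod_spiTilt_div_prod_spiTilt p hp_pos θt θ₀ w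
  have hf_move : ∀ j, c (z j) (z (j - 1)) ≠ 0 →
      f (moveB j (j - 1) z) = Real.exp (θt (j - 1) - θt j) * f z := fun j hc ↦ by
    rw [hf_exp, hf_exp, sum_mul_moveB_of_allowed _ (moveB_allowed_of_rate_ne_zero hA₁ hA₂ hc),
      ← Real.exp_add]
    congr 1
    ring
  rw [LstarApply_eq_mul_of_moveB _ hf_move, mul_div_cancel_right₀ _ (hf_exp z ▸ (exp_pos _).ne')]
  exact Fintype.sum_equiv (Equiv.subRight 1) _ _ fun j ↦ by simp

/-- Exact formula for `L^{N*}f/f` for a tilted product measure. -/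
theorem reversed_generator_formula_for_tilted_product
    (zmin zmax : ℤ) (hzz : zmin < zmax) (hzmin : zmin ≤ 0) (hzmax : 0 ≤ zmax)
    (c : ℤ → ℤ → ℝ)
    (hc_nonneg : ∀ x ∈ Finset.Icc zmin zmax, ∀ y ∈ Finset.Icc zmin zmax, 0 ≤ c x y)
    (hA₁ : ∀ y ∈ Finset.Icc zmin zmax, c zmin y = 0)
    (hA₂ : ∀ x ∈ Finset.Icc zmin zmax, c x zmax = 0)
    (p : ℤ → ℝ) (hp_pos : ∀ x ∈ Finset.Icc zmin zmax, 0 < p x)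
    (hp_sum : ∑ x ∈ Finset.Icc zmin zmax, p x = 1)
    (θ₀ : ℝ) (N : ℕ) [NeZero N]
    (θt : ZMod N → ℝ)
    (f : (ZMod N → Spin zmin zmax) → ℝ)
    (hf : f = fun z =>
      (∏ j : ZMod N, spiTilt zmin zmax p (θt j) (z j)) /
        (∏ j : ZMod N, spiTilt zmin zmax p θ₀ (z j))) :
    ∀ z : ZMod N → Spin zmin zmax,
      LstarApply zmin zmax c N f z / f z
        = ∑ j : ZMod N, (Real.exp (θt j - θt (j + 1)) - 1) * c (z (j + 1)) (z j) :=
  reversed_generator_formula_for_tilted_product_general zmin zmax c hA₁ hA₂ p hp_pos θ₀ N θt f hf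

end
end

section
/- Entropy production inequality (Yau's inequality, finite state space). Let Ω be a finite set, L a Markov generator on functions on Ω (L f(x) = Σ_y q(x,y)(f(y) − f(x)) with jump rates q(x,y) ≥ 0), and π a strictly positive probability measure on Ω that is stationary for L (Σ_x π(x) (L f)(x) = 0 for all f). Let L* denote the adjoint of L in L²(Ω, π). Let t ↦ f_t be a continuously differentiable family of strictly positive probability densities with respect to π, ν_t := f_t · π, let μ₀ be a strictly positive probability measure on Ω and μ_t := μ₀ e^{tL} (i.e. ∫ g dμ_t = ∫ e^{tL} g dμ₀ for all g). Then for every t ≥ 0: (d/dt) H(μ_t | ν_t) ≤ ∫_Ω (L* f_t)/f_t dμ_t − ∫_Ω (∂_t f_t)/f_t dμ_t. -/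
open Real
open scoped BigOperators Classical

noncomputable section

/-- The generator matrix of the Markov generator `L f (x) = Σ_y q(x,y)(f(y) − f(x))`,
so that `L f = genMatrix q |>.mulVec f`. -/
def genMatrix {Ω : Type*} [Fintype Ω] [DecidableEq Ω] (q : Ω → Ω → ℝ) :
    Matrix Ω Ω ℝ :=
  fun x y => q x y - if x = y then ∑ w, q x w else 0

/-- The adjoint generator matrix in `L²(Ω, π)`:
`L* g = (adjMatrix q pr).mulVec g`. -/
def adjMatrix {Ω : Type*} [Fintype Ω] [DecidableEq Ω] (q : Ω → Ω → ℝ) (pr : Ω → ℝ) :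
    Matrix Ω Ω ℝ :=
  fun x y => pr y * genMatrix q y x / pr x

/-- The true distribution at time `t`, i.e. `μ_t = μ₀ e^{tL}`,
   characterized by `∫ g dμ_t = ∫ e^{tL} g dμ₀`. -/
def muT {Ω : Type*} [Fintype Ω] [DecidableEq Ω] (q : Ω → Ω → ℝ) (μ0 : Ω → ℝ)
    (t : ℝ) : Ω → ℝ :=
  Matrix.vecMul μ0 (NormedSpace.exp (t • genMatrix q))

/-!
Write `μ_t` for `muT q μ0 t` and `g = μ_t / (f_t π)`. Differentiating,
`d/dt H(μ_t | ν_t) = Σ (μ_t L)(x) log g(x) + Σ (μ_t L)(x) - Σ μ_t ∂_t f_t / f_t`,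
and the middle sum vanishes because `L` kills constants. The first sum is `Σ μ_t L(log g)`,
and `L(log g) ≤ (L g) / g` pointwise because `q ≥ 0` and `log a - log b ≤ a / b - 1`.
Since `μ_t / g = f_t π`, the bound is `⟨f_t, L g⟩_π = ⟨L* f_t, g⟩_π = Σ μ_t (L* f_t) / f_t`.
The logarithms are harmless because `μ_t > 0`: for `c` large, `L + c` has nonnegative entries,
so `e^{tL} = e^{-ct} e^{t(L + c)}` is entrywise nonnegative with positive diagonal.
-/

namespace Matrix

variable {Ω : Type*} [Fintype Ω] [DecidableEq Ω]

attribute [local instance] Matrix.linftyOpNormedRing Matrix.linftyOpNormedAlgebra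

theorem one_apply_le_exp_apply_of_nonneg {M : Matrix Ω Ω ℝ} (hM : ∀ x y, 0 ≤ M x y) (x y : Ω) :
    (1 : Matrix Ω Ω ℝ) x y ≤ NormedSpace.exp M x y := by
  have hsum : HasSum (fun n : ℕ => ((n.factorial : ℝ)⁻¹ • M ^ n) x y) (NormedSpace.exp M x y) :=
    Pi.hasSum.1 (Pi.hasSum.1 (NormedSpace.exp_series_hasSum_exp' (𝕂 := ℝ) M) x) y
  simpa using le_hasSum hsum 0 fun n _ => by
    rw [smul_apply, smul_eq_mul]; exact mul_nonneg (by positivity) (pow_apply_nonneg hM n x y)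

theorem exp_add_smul_one (M : Matrix Ω Ω ℝ) (c : ℝ) :
    NormedSpace.exp (M + c • 1) = Real.exp c • NormedSpace.exp M := by
  rw [exp_add_of_commute _ _ ((Commute.one_right M).smul_right c), ← Algebra.algebraMap_eq_smul_one]
  erw [← NormedSpace.algebraMap_exp_comm]
  rw [← Real.exp_eq_exp_ℝ, Algebra.algebraMap_eq_smul_one, mul_smul_comm, mul_one]

theorem exists_add_smul_one_nonneg {M : Matrix Ω Ω ℝ} (hM : ∀ x y, x ≠ y → 0 ≤ M x y) :
    ∃ c : ℝ, ∀ x y, 0 ≤ (M + c • 1) x y := by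
  refine ⟨∑ z, |M z z|, fun x y => ?_⟩
  rw [add_apply, smul_apply, one_apply, smul_eq_mul]
  split_ifs with hxy
  · subst hxy
    have := Finset.single_le_sum (fun z _ => abs_nonneg (M z z)) (Finset.mem_univ x)
    linarith [neg_abs_le (M x x)]
  · simpa using hM x y hxy

theorem exp_eq_exp_neg_smul_exp_add_smul_one (M : Matrix Ω Ω ℝ) (c : ℝ) :
    NormedSpace.exp M = Real.exp (-c) • NormedSpace.exp (M + c • 1) := by
  conv_lhs => rw [show M = (M + c • 1) + (-c) • 1 by module, exp_add_smul_one]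

theorem exp_apply_nonneg_of_offDiag_nonneg {M : Matrix Ω Ω ℝ}
    (hM : ∀ x y, x ≠ y → 0 ≤ M x y) (x y : Ω) : 0 ≤ NormedSpace.exp M x y := by
  obtain ⟨c, hc⟩ := exists_add_smul_one_nonneg hM
  have hone : 0 ≤ (1 : Matrix Ω Ω ℝ) x y := by rw [one_apply]; positivity
  rw [exp_eq_exp_neg_smul_exp_add_smul_one M c, smul_apply, smul_eq_mul]
  exact mul_nonneg (Real.exp_pos _).le (hone.trans (one_apply_le_exp_apply_of_nonneg hc x y))

theorem exp_apply_self_pos_of_offDiag_nonneg {M : Matrix Ω Ω ℝ}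
    (hM : ∀ x y, x ≠ y → 0 ≤ M x y) (x : Ω) : 0 < NormedSpace.exp M x x := by
  obtain ⟨c, hc⟩ := exists_add_smul_one_nonneg hM
  have hdiag := one_apply_le_exp_apply_of_nonneg hc x x
  rw [one_apply_eq] at hdiag
  rw [exp_eq_exp_neg_smul_exp_add_smul_one M c, smul_apply, smul_eq_mul]
  exact mul_pos (Real.exp_pos _) (one_pos.trans_le hdiag)

end Matrix

theorem hasDerivAt_sum_mul_log_div {Ω : Type*} [Fintype Ω] {μ ν : ℝ → Ω → ℝ} {μ' ν' : Ω → ℝ}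
    {t : ℝ} (hμ : ∀ x, HasDerivAt (fun s => μ s x) (μ' x) t)
    (hν : ∀ x, HasDerivAt (fun s => ν s x) (ν' x) t) (hμ0 : ∀ x, μ t x ≠ 0)
    (hν0 : ∀ x, ν t x ≠ 0) :
    HasDerivAt (fun s => ∑ x, μ s x * Real.log (μ s x / ν s x))
      (∑ x, (μ' x * Real.log (μ t x / ν t x) + μ' x - μ t x * (ν' x / ν t x))) t := by
  refine HasDerivAt.fun_sum fun x _ => ?_
  have hlog := ((hμ x).div (hν x) (hν0 x)).log (div_ne_zero (hμ0 x) (hν0 x))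
  refine ((hμ x).mul hlog).congr_deriv ?_
  simp only [Pi.div_apply]
  field_simp [hμ0 x, hν0 x]
  ring

section MarkovGenerator

open Matrix

variable {Ω : Type*} [Fintype Ω] [DecidableEq Ω]

theorem genMatrix_mulVec_apply (q : Ω → Ω → ℝ) (h : Ω → ℝ) (y : Ω) :
    (genMatrix q *ᵥ h) y = ∑ x, q y x * (h x - h y) := by
  simp only [mulVec, dotProduct, genMatrix, sub_mul, ite_mul, zero_mul, mul_sub,
    Finset.sum_sub_distrib, Finset.sum_ite_eq, Finset.mem_univ, if_true, Finset.sum_mul]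

theorem sum_vecMul_genMatrix (q : Ω → Ω → ℝ) (v : Ω → ℝ) : ∑ x, (v ᵥ* genMatrix q) x = 0 := by
  have hconst : genMatrix q *ᵥ (fun _ => 1) = 0 := by
    ext y; simp [genMatrix_mulVec_apply]
  simpa [dotProduct, hconst] using (dotProduct_mulVec v (genMatrix q) fun _ => (1 : ℝ)).symm

theorem genMatrix_apply_nonneg {q : Ω → Ω → ℝ} (hq : ∀ x y, 0 ≤ q x y) {x y : Ω} (hxy : x ≠ y) :
    0 ≤ genMatrix q x y := by
  simpa [genMatrix, hxy] using hq x y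

theorem muT_pos {q : Ω → Ω → ℝ} (hq : ∀ x y, 0 ≤ q x y) {μ0 : Ω → ℝ} (hμ0 : ∀ x, 0 < μ0 x)
    {t : ℝ} (ht : 0 ≤ t) (y : Ω) : 0 < muT q μ0 t y := by
  have hM : ∀ x z, x ≠ z → 0 ≤ (t • genMatrix q) x z := fun x z hxz =>
    mul_nonneg ht (genMatrix_apply_nonneg hq hxz)
  refine Finset.sum_pos' (fun x _ => mul_nonneg (hμ0 x).le ?_) ⟨y, Finset.mem_univ y, ?_⟩
  · exact exp_apply_nonneg_of_offDiag_nonneg hM x y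
  · exact mul_pos (hμ0 y) (exp_apply_self_pos_of_offDiag_nonneg hM y)

section MatrixExp

attribute [local instance] Matrix.linftyOpNormedRing Matrix.linftyOpNormedAlgebra

theorem hasDerivAt_muT (q : Ω → Ω → ℝ) (μ0 : Ω → ℝ) (t : ℝ) (x : Ω) :
    HasDerivAt (fun s => muT q μ0 s x) ((muT q μ0 t ᵥ* genMatrix q) x) t := by
  let evalVecMul : Matrix Ω Ω ℝ →L[ℝ] ℝ := LinearMap.toContinuousLinearMap
    { toFun := fun B => (μ0 ᵥ* B) x
      map_add' := fun B C => by rw [vecMul_add]; rfl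
      map_smul' := fun c B => by rw [vecMul_smul]; rfl }
  have h := evalVecMul.hasFDerivAt.comp_hasDerivAt t (hasDerivAt_exp_smul_const (genMatrix q) t)
  refine h.congr_deriv ?_
  show (μ0 ᵥ* (NormedSpace.exp (t • genMatrix q) * genMatrix q)) x = _
  rw [← vecMul_vecMul]; rfl

end MatrixExp

theorem genMatrix_mulVec_log_le {q : Ω → Ω → ℝ} (hq : ∀ x y, 0 ≤ q x y) {g : Ω → ℝ}
    (hg : ∀ x, 0 < g x) (y : Ω) :
    (genMatrix q *ᵥ fun x => Real.log (g x)) y ≤ (genMatrix q *ᵥ g) y / g y := by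
  rw [genMatrix_mulVec_apply, genMatrix_mulVec_apply, Finset.sum_div]
  refine Finset.sum_le_sum fun x _ => ?_
  rw [mul_div_assoc, sub_div, div_self (hg y).ne', ← Real.log_div (hg x).ne' (hg y).ne']
  exact mul_le_mul_of_nonneg_left (Real.log_le_sub_one_of_pos (div_pos (hg x) (hg y))) (hq y x)

theorem sum_mul_genMatrix_mulVec_eq_sum_adjMatrix_mulVec_mul (q : Ω → Ω → ℝ) {pr : Ω → ℝ}
    (hpr : ∀ x, pr x ≠ 0) (F g : Ω → ℝ) :
    ∑ x, pr x * F x * (genMatrix q *ᵥ g) x = ∑ x, pr x * (adjMatrix q pr *ᵥ F) x * g x := by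
  simp only [mulVec, dotProduct, adjMatrix, Finset.mul_sum, Finset.sum_mul]
  rw [Finset.sum_comm]
  refine Finset.sum_congr rfl fun x _ => Finset.sum_congr rfl fun y _ => ?_
  field_simp [hpr x]

theorem sum_vecMul_genMatrix_mul_log_le {q : Ω → Ω → ℝ} (hq : ∀ x y, 0 ≤ q x y) {pr : Ω → ℝ}
    (hpr : ∀ x, 0 < pr x) {m F : Ω → ℝ} (hm : ∀ x, 0 < m x) (hF : ∀ x, 0 < F x) :
    ∑ x, (m ᵥ* genMatrix q) x * Real.log (m x / (F x * pr x)) ≤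
      ∑ x, m x * ((adjMatrix q pr *ᵥ F) x / F x) := by
  set g : Ω → ℝ := fun x => m x / (F x * pr x)
  have hg : ∀ x, 0 < g x := fun x => div_pos (hm x) (mul_pos (hF x) (hpr x))
  have hm_eq : ∀ x, m x = pr x * F x * g x := fun x => by
    simp only [g]; field_simp [(hF x).ne', (hpr x).ne']
  calc ∑ x, (m ᵥ* genMatrix q) x * Real.log (g x)
      = ∑ y, m y * (genMatrix q *ᵥ fun x => Real.log (g x)) y :=
        (dotProduct_mulVec m (genMatrix q) _).symm
    _ ≤ ∑ y, m y * ((genMatrix q *ᵥ g) y / g y) := Finset.sum_le_sum fun y _ =>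
        mul_le_mul_of_nonneg_left (genMatrix_mulVec_log_le hq hg y) (hm y).le
    _ = ∑ y, pr y * F y * (genMatrix q *ᵥ g) y := Finset.sum_congr rfl fun y _ => by
        rw [hm_eq y]; field_simp [(hg y).ne']
    _ = ∑ x, pr x * (adjMatrix q pr *ᵥ F) x * g x :=
        sum_mul_genMatrix_mulVec_eq_sum_adjMatrix_mulVec_mul q (fun x => (hpr x).ne') F g
    _ = ∑ x, m x * ((adjMatrix q pr *ᵥ F) x / F x) := Finset.sum_congr rfl fun x _ => by
        rw [hm_eq x]; field_simp [(hF x).ne']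

end MarkovGenerator

theorem entropy_production_inequality_general
    (Ω : Type*) [Fintype Ω] [DecidableEq Ω]
    (q : Ω → Ω → ℝ) (hq_nonneg : ∀ x y, 0 ≤ q x y)
    (pr : Ω → ℝ) (hpr_pos : ∀ x, 0 < pr x)
    (f : ℝ → Ω → ℝ)
    (hf_diff : ∀ x, ContDiff ℝ 1 (fun t => f t x))
    (hf_pos : ∀ t x, 0 < f t x)
    (μ0 : Ω → ℝ) (hμ0_pos : ∀ x, 0 < μ0 x) :
    ∀ t : ℝ, 0 ≤ t →
      ∀ d : ℝ,
        HasDerivAt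
          (fun s => ∑ x, muT q μ0 s x * Real.log (muT q μ0 s x / (f s x * pr x))) d t →
        d ≤ (∑ x, muT q μ0 t x * (((adjMatrix q pr).mulVec (f t)) x / f t x))
            - ∑ x, muT q μ0 t x * (deriv (fun s => f s x) t / f t x) := by
  intro t ht d hd
  have hμ_pos : ∀ x, 0 < muT q μ0 t x := muT_pos hq_nonneg hμ0_pos ht
  have hf_deriv : ∀ x, HasDerivAt (fun s => f s x) (deriv (fun s => f s x) t) t := fun x =>
    ((hf_diff x).differentiable one_ne_zero t).hasDerivAt
  have hentropy := hasDerivAt_sum_mul_log_div (hasDerivAt_muT q μ0 t)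
    (fun x => (hf_deriv x).mul_const (pr x)) (fun x => (hμ_pos x).ne')
    (fun x => (mul_pos (hf_pos t x) (hpr_pos x)).ne')
  have hyau := sum_vecMul_genMatrix_mul_log_le hq_nonneg hpr_pos hμ_pos (hf_pos t)
  simp only [mul_div_mul_right _ _ (hpr_pos _).ne'] at hentropy
  rw [hd.unique hentropy, Finset.sum_sub_distrib, Finset.sum_add_distrib, sum_vecMul_genMatrix]
  linarith

/-- Entropy production inequality (Yau's inequality, finite state
space). -/
theorem entropy_production_inequality
    (Ω : Type*) [Fintype Ω] [DecidableEq Ω] [Nonempty Ω]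
    (q : Ω → Ω → ℝ) (hq_nonneg : ∀ x y, 0 ≤ q x y)
    (pr : Ω → ℝ) (hpr_pos : ∀ x, 0 < pr x) (hpr_sum : ∑ x, pr x = 1)
    (hstat : ∀ g : Ω → ℝ, ∑ x, pr x * ((genMatrix q).mulVec g x) = 0)
    (f : ℝ → Ω → ℝ)
    (hf_diff : ∀ x, ContDiff ℝ 1 (fun t => f t x))
    (hf_pos : ∀ t x, 0 < f t x)
    (hf_prob : ∀ t, ∑ x, pr x * f t x = 1)
    (μ0 : Ω → ℝ) (hμ0_pos : ∀ x, 0 < μ0 x) (hμ0_sum : ∑ x, μ0 x = 1) :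
    ∀ t : ℝ, 0 ≤ t →
      ∀ d : ℝ,
        HasDerivAt
          (fun s => ∑ x, muT q μ0 s x * Real.log (muT q μ0 s x / (f s x * pr x))) d t →
        d ≤ (∑ x, muT q μ0 t x * (((adjMatrix q pr).mulVec (f t)) x / f t x))
            - ∑ x, muT q μ0 t x * (deriv (fun s => f s x) t / f t x) :=
  entropy_production_inequality_general Ω q hq_nonneg pr hpr_pos f hf_diff hf_pos μ0 hμ0_pos

end
end

section
/- Equivalence of the cyclic rate condition with the existence of the function r. Let z_min < z_max be integers, S = {z_min, …, z_max} ⊂ ℤ, and let c : S×S → [0,∞) satisfy c(x, y) > 0 whenever x > z_min and y < z_max. Then the following are equivalent: (i) for all x, y, z ∈ S with x, y, z > z_min: c(x, y−1) c(y, z−1) c(z, x−1) = c(y, x−1) c(z, y−1) c(x, z−1); (ii) there exists r : S → [0,∞) with r(z_min) = 0 and r(x) > 0 for all x ∈ S with x > z_min, such that c(x, y−1) r(y) = c(y, x−1) r(x) for all x, y ∈ S with x, y > z_min. -/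
/-!
Write `k x y = c(x, y - 1)` on `T = {z_min < x ≤ z_max}`, where `k` is strictly positive.
If `r` balances `k`, multiplying the three balance relations around the cycle `x → y → z → x`
and cancelling `r x r y r z` gives the cycle condition. Conversely, the cycle condition through
a fixed reference point `z₀ ∈ T` says exactly that `r x = k x z₀ / k z₀ x` balances `k`;
extending `r` by `0` outside `T` gives `r z_min = 0`.
-/

section DetailedBalance

variable {α : Type*} (s : Set α) (k : α → α → ℝ)

def CycleCondition : Prop :=
  ∀ x ∈ s, ∀ y ∈ s, ∀ z ∈ s, k x y * k y z * k z x = k y x * k z y * k x z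

def IsDetailedBalanced (r : α → ℝ) : Prop :=
  ∀ x ∈ s, ∀ y ∈ s, k x y * r y = k y x * r x

variable {s k}

theorem isDetailedBalanced_ratio (hk : ∀ x ∈ s, ∀ y ∈ s, 0 < k x y)
    (hcyc : CycleCondition s k) {z₀ : α} (hz₀ : z₀ ∈ s) :
    IsDetailedBalanced s k (fun x => k x z₀ / k z₀ x) := by
  intro x hx y hy
  have hxz := (hk z₀ hz₀ x hx).ne'
  have hyz := (hk z₀ hz₀ y hy).ne'
  field_simp
  linear_combination hcyc x hx y hy z₀ hz₀

theorem IsDetailedBalanced.cycleCondition {r : α → ℝ} (hr : ∀ x ∈ s, 0 < r x)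
    (hbal : IsDetailedBalanced s k r) : CycleCondition s k := by
  intro x hx y hy z hz
  have hrxyz : r x * r y * r z ≠ 0 := (mul_pos (mul_pos (hr x hx) (hr y hy)) (hr z hz)).ne'
  refine mul_right_cancel₀ hrxyz ?_
  calc k x y * k y z * k z x * (r x * r y * r z)
      = (k x y * r y) * (k y z * r z) * (k z x * r x) := by ring
    _ = (k y x * r x) * (k z y * r y) * (k x z * r z) := by
        rw [hbal x hx y hy, hbal y hy z hz, hbal z hz x hx]
    _ = k y x * k z y * k x z * (r x * r y * r z) := by ring

theorem cycleCondition_iff_exists_isDetailedBalanced (hs : s.Nonempty)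
    (hk : ∀ x ∈ s, ∀ y ∈ s, 0 < k x y) :
    CycleCondition s k ↔
      ∃ r : α → ℝ, (∀ x ∈ s, 0 < r x) ∧ IsDetailedBalanced s k r := by
  refine ⟨fun hcyc => ?_, fun ⟨r, hr, hbal⟩ => hbal.cycleCondition hr⟩
  obtain ⟨z₀, hz₀⟩ := hs
  exact ⟨_, fun x hx => div_pos (hk x hx z₀ hz₀) (hk z₀ hz₀ x hx),
    isDetailedBalanced_ratio hk hcyc hz₀⟩

theorem IsDetailedBalanced.indicator {r : α → ℝ} (hbal : IsDetailedBalanced s k r) :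
    IsDetailedBalanced s k (s.indicator r) := by
  intro x hx y hy
  rw [Set.indicator_of_mem hx, Set.indicator_of_mem hy]
  exact hbal x hx y hy

end DetailedBalance

theorem cyclic_condition_iff_exists_r_general
    (zmin zmax : ℤ) (hz : zmin < zmax)
    (c : ℤ → ℤ → ℝ)
    (hc_pos : ∀ x ∈ Finset.Icc zmin zmax, ∀ y ∈ Finset.Icc zmin zmax,
      zmin < x → y < zmax → 0 < c x y) :
    (∀ x ∈ Finset.Icc zmin zmax, ∀ y ∈ Finset.Icc zmin zmax, ∀ z ∈ Finset.Icc zmin zmax,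
        zmin < x → zmin < y → zmin < z →
        c x (y - 1) * c y (z - 1) * c z (x - 1) = c y (x - 1) * c z (y - 1) * c x (z - 1))
      ↔
    (∃ r : ℤ → ℝ,
        r zmin = 0 ∧
        (∀ x ∈ Finset.Icc zmin zmax, zmin < x → 0 < r x) ∧
        (∀ x ∈ Finset.Icc zmin zmax, ∀ y ∈ Finset.Icc zmin zmax,
          zmin < x → zmin < y → c x (y - 1) * r y = c y (x - 1) * r x)) := by
  set T := Set.Ioc zmin zmax
  have mem_T {x : ℤ} (hx : x ∈ Finset.Icc zmin zmax) (hxm : zmin < x) : x ∈ T :=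
    ⟨hxm, (Finset.mem_Icc.1 hx).2⟩
  have mem_Icc {x : ℤ} (hx : x ∈ T) : x ∈ Finset.Icc zmin zmax :=
    Finset.mem_Icc.2 ⟨hx.1.le, hx.2⟩
  have hk : ∀ x ∈ T, ∀ y ∈ T, 0 < c x (y - 1) := fun x hx y hy =>
    hc_pos x (mem_Icc hx) (y - 1) (Finset.mem_Icc.2 ⟨by linarith [hy.1], by linarith [hy.2]⟩)
      hx.1 (by linarith [hy.2])
  constructor
  · intro hcyc
    obtain ⟨r, hr, hbal⟩ :=
      (cycleCondition_iff_exists_isDetailedBalanced (Set.nonempty_Ioc.2 hz) hk).1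
        fun x hx y hy z hz => hcyc x (mem_Icc hx) y (mem_Icc hy) z (mem_Icc hz) hx.1 hy.1 hz.1
    refine ⟨T.indicator r, Set.indicator_of_notMem (lt_irrefl _ ·.1) _, fun x hx hxm => ?_,
      fun x hx y hy hxm hym => hbal.indicator x (mem_T hx hxm) y (mem_T hy hym)⟩
    rw [Set.indicator_of_mem (mem_T hx hxm)]
    exact hr x (mem_T hx hxm)
  · rintro ⟨r, -, hr, hbal⟩ x hx y hy z hz hxm hym hzm
    have hbalT : IsDetailedBalanced T (fun x y => c x (y - 1)) r :=
      fun x hx y hy => hbal x (mem_Icc hx) y (mem_Icc hy) hx.1 hy.1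
    exact hbalT.cycleCondition (fun x hx => hr x (mem_Icc hx) hx.1)
      x (mem_T hx hxm) y (mem_T hy hym) z (mem_T hz hzm)

/-- Equivalence of the cyclic rate condition with the existence of
the function `r`. -/
theorem cyclic_condition_iff_exists_r
    (zmin zmax : ℤ) (hz : zmin < zmax)
    (c : ℤ → ℤ → ℝ)
    (hc_nonneg : ∀ x ∈ Finset.Icc zmin zmax, ∀ y ∈ Finset.Icc zmin zmax, 0 ≤ c x y)
    (hc_pos : ∀ x ∈ Finset.Icc zmin zmax, ∀ y ∈ Finset.Icc zmin zmax,
      zmin < x → y < zmax → 0 < c x y) :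
    (∀ x ∈ Finset.Icc zmin zmax, ∀ y ∈ Finset.Icc zmin zmax, ∀ z ∈ Finset.Icc zmin zmax,
        zmin < x → zmin < y → zmin < z →
        c x (y - 1) * c y (z - 1) * c z (x - 1) = c y (x - 1) * c z (y - 1) * c x (z - 1))
      ↔
    (∃ r : ℤ → ℝ,
        r zmin = 0 ∧
        (∀ x ∈ Finset.Icc zmin zmax, zmin < x → 0 < r x) ∧
        (∀ x ∈ Finset.Icc zmin zmax, ∀ y ∈ Finset.Icc zmin zmax,
          zmin < x → zmin < y → c x (y - 1) * r y = c y (x - 1) * r x)) :=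
  cyclic_condition_iff_exists_r_general zmin zmax hz c hc_pos
end

section
/- Generalized Hölder inequality for block-local functions under a product measure. Let N = M·l with M, l ∈ ℕ, let (E_j, 𝔈_j, ν_j)_{j∈T^N} be probability spaces and ν = ⊗_{j∈T^N} ν_j the product probability measure on E = Π_{j∈T^N} E_j. For each j ∈ T^N let g_j : E → [0,∞) be measurable and depend only on the coordinates (z_j, z_{j+1}, …, z_{j+l−1}) (indices mod N). Then ∫_E exp( Σ_{j∈T^N} g_j ) dν ≤ ( Π_{j∈T^N} ∫_E exp( l · g_j ) dν )^{1/l}, the inequality holding in [0, ∞]. -/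
open MeasureTheory ENNReal

/-!
Split `ZMod N` into the `l` residue classes modulo `l`. Inside one class the windows
`{j, …, j + l - 1}` are pairwise disjoint, so under the product measure the functions
`exp (l * g j)` with `j` in that class are independent and the integral of their product
factorizes. Since `exp (∑ j, g j)` is the product over the `l` classes of
`(exp (l * ∑_{class} g j)) ^ (1 / l)`, Hölder's inequality with the `l` equal exponents `1 / l`
reduces the claim to these factorizations.
-/

open ProbabilityTheory

lemma DependsOn.eq_comp_restrict {ι β : Type*} [DecidableEq ι] {α : ι → Type*}
    {f : (∀ i, α i) → β} {s : Finset ι} (hf : DependsOn f s) (x : ∀ i, α i) :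
    f = (fun y ↦ f (Function.updateFinset x s y)) ∘ s.restrict :=
  funext fun z ↦ hf fun i hi ↦ by simp [Function.updateFinset, Finset.mem_coe.mp hi]

section ProductMeasure

variable {ι : Type*} [Fintype ι] {E : ι → Type*} [∀ i, MeasurableSpace (E i)]
  {ν : ∀ i, Measure (E i)} [∀ i, IsProbabilityMeasure (ν i)]

theorem indepFun_pi_of_dependsOn_disjoint {β γ : Type*} [MeasurableSpace β] [MeasurableSpace γ]
    {f : (∀ i, E i) → β} {g : (∀ i, E i) → γ} {s t : Finset ι} (hst : Disjoint s t)
    (hf : Measurable f) (hg : Measurable g) (hfs : DependsOn f s) (hgt : DependsOn g t) :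
    IndepFun f g (Measure.pi ν) := by
  classical
  obtain ⟨x⟩ : Nonempty (∀ i, E i) := ⟨fun i ↦ (nonempty_of_isProbabilityMeasure (ν i)).some⟩
  rw [hfs.eq_comp_restrict x, hgt.eq_comp_restrict x]
  have hcoord : iIndepFun (fun i (z : ∀ i, E i) ↦ z i) (Measure.pi ν) :=
    iIndepFun_pi (X := fun _ ↦ id) fun _ ↦ aemeasurable_id
  exact (hcoord.indepFun_finset s t hst measurable_pi_apply).comp
    (hf.comp measurable_updateFinset) (hg.comp measurable_updateFinset)

theorem lintegral_prod_pi_of_dependsOn_pairwiseDisjoint {κ : Type*} (s : Finset κ)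
    {B : κ → Finset ι} (hB : (s : Set κ).PairwiseDisjoint B) {h : κ → (∀ i, E i) → ℝ≥0∞}
    (hmeas : ∀ k, Measurable (h k)) (hdep : ∀ k ∈ s, DependsOn (h k) (B k)) :
    ∫⁻ z, ∏ k ∈ s, h k z ∂Measure.pi ν = ∏ k ∈ s, ∫⁻ z, h k z ∂Measure.pi ν := by
  classical
  induction s using Finset.induction with
  | empty => simp
  | insert a s ha ih =>
    have hrest : DependsOn (fun z ↦ ∏ k ∈ s, h k z) (s.biUnion B) := fun z w hzw ↦
      Finset.prod_congr rfl fun k hk ↦ hdep k (Finset.mem_insert_of_mem hk) fun i hi ↦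
        hzw i (Finset.mem_biUnion.mpr ⟨k, hk, hi⟩)
    have hdisj : Disjoint (B a) (s.biUnion B) :=
      (Finset.disjoint_biUnion_right _ _ _).mpr fun k hk ↦
        hB (by simp) (by simp [hk]) fun hak ↦ ha (hak ▸ hk)
    simp only [Finset.prod_insert ha]
    rw [← ih (hB.subset (by simp)) fun k hk ↦ hdep k (Finset.mem_insert_of_mem hk)]
    exact lintegral_mul_eq_lintegral_mul_lintegral_of_indepFun (hmeas a)
      (Finset.measurable_prod s fun k _ ↦ hmeas k)
      (indepFun_pi_of_dependsOn_disjoint hdisj (hmeas a)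
        (Finset.measurable_prod s fun k _ ↦ hmeas k) (hdep a (by simp)) hrest)

end ProductMeasure

lemma ENNReal.ofReal_exp_sum {α : Type*} (s : Finset α) (f : α → ℝ) :
    ENNReal.ofReal (Real.exp (∑ i ∈ s, f i)) = ∏ i ∈ s, ENNReal.ofReal (Real.exp (f i)) := by
  rw [Real.exp_sum, ENNReal.ofReal_prod_of_nonneg fun i _ ↦ (Real.exp_pos _).le]

lemma ENNReal.ofReal_exp_eq_ofReal_exp_mul_rpow {a t : ℝ} (ht : t ≠ 0) :
    ENNReal.ofReal (Real.exp a) = ENNReal.ofReal (Real.exp (t * a)) ^ (1 / t) := by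
  rw [ENNReal.ofReal_rpow_of_pos (Real.exp_pos _), ← Real.exp_mul]
  field_simp

def window {N : ℕ} (l : ℕ) (j : ZMod N) : Finset (ZMod N) :=
  Finset.univ.image fun r : Fin l ↦ j + ((r : ℕ) : ZMod N)

lemma pairwiseDisjoint_window_of_castHom_eq {N l : ℕ} (hlN : l ∣ N) (c : ZMod l) :
    {j : ZMod N | ZMod.castHom hlN (ZMod l) j = c}.PairwiseDisjoint (window l) := by
  intro j hj j' hj' hjj'
  simp only [window, Finset.disjoint_left, Finset.mem_image, Finset.mem_univ, true_and]
  rintro _ ⟨r, rfl⟩ ⟨r', hr'⟩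
  have hmod : ((r' : ℕ) : ZMod l) = ((r : ℕ) : ZMod l) := by
    have := congrArg (ZMod.castHom hlN (ZMod l)) hr'
    rw [map_add, map_add, map_natCast, map_natCast, hj', ← hj] at this
    exact add_left_cancel this
  rw [ZMod.natCast_eq_natCast_iff', Nat.mod_eq_of_lt r'.isLt, Nat.mod_eq_of_lt r.isLt] at hmod
  exact hjj' (add_right_cancel (hmod ▸ hr')).symm

theorem holder_inequality_for_block_local_functions_general
    (M l : ℕ) (hl : 0 < l) (N : ℕ) [NeZero N] (hN : N = M * l)
    (E : ZMod N → Type*) [∀ j, MeasurableSpace (E j)]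
    (ν : ∀ j, Measure (E j)) [∀ j, IsProbabilityMeasure (ν j)]
    (g : ZMod N → (∀ j, E j) → ℝ)
    (hg_meas : ∀ j, Measurable (g j))
    (hg_local : ∀ j : ZMod N, ∀ z w : ∀ i, E i,
      (∀ i : Fin l, z (j + (i : ℕ)) = w (j + (i : ℕ))) → g j z = g j w) :
    ∫⁻ z, ENNReal.ofReal (Real.exp (∑ j : ZMod N, g j z)) ∂(Measure.pi ν)
      ≤ (∏ j : ZMod N,
          ∫⁻ z, ENNReal.ofReal (Real.exp ((l : ℝ) * g j z)) ∂(Measure.pi ν)) ^ (1 / (l : ℝ)) := by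
  classical
  have : NeZero l := ⟨hl.ne'⟩
  have hl0 : (l : ℝ) ≠ 0 := by positivity
  have hlN : l ∣ N := hN ▸ dvd_mul_left l M
  set res := ZMod.castHom hlN (ZMod l)
  set G : ZMod N → (∀ j, E j) → ℝ≥0∞ := fun j z ↦ ENNReal.ofReal (Real.exp (l * g j z))
  set F : ZMod l → (∀ j, E j) → ℝ≥0∞ := fun c z ↦ ∏ j with res j = c, G j z
  have hG_meas (j : ZMod N) : Measurable (G j) := ((hg_meas j).const_mul _).exp.ennreal_ofReal
  have hsplit (z : ∀ j, E j) :
      ENNReal.ofReal (Real.exp (∑ j, g j z)) = ∏ c, F c z ^ (1 / (l : ℝ)) := by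
    rw [← Finset.sum_fiberwise Finset.univ res, ENNReal.ofReal_exp_sum]
    refine Finset.prod_congr rfl fun c _ ↦ ?_
    rw [ENNReal.ofReal_exp_eq_ofReal_exp_mul_rpow hl0, Finset.mul_sum, ENNReal.ofReal_exp_sum]
  have hF (c : ZMod l) :
      ∫⁻ z, F c z ∂Measure.pi ν = ∏ j with res j = c, ∫⁻ z, G j z ∂Measure.pi ν :=
    lintegral_prod_pi_of_dependsOn_pairwiseDisjoint _ (B := window l)
      (by rw [Finset.coe_filter_univ]; exact pairwiseDisjoint_window_of_castHom_eq hlN c) hG_meas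
      fun j _ z w hzw ↦ by simp only [G, hg_local j z w fun r ↦ hzw _ (by simp [window])]
  calc ∫⁻ z, ENNReal.ofReal (Real.exp (∑ j, g j z)) ∂Measure.pi ν
      = ∫⁻ z, ∏ c, F c z ^ (1 / (l : ℝ)) ∂Measure.pi ν := lintegral_congr hsplit
    _ ≤ ∏ c, (∫⁻ z, F c z ∂Measure.pi ν) ^ (1 / (l : ℝ)) :=
      ENNReal.lintegral_prod_norm_pow_le _
        (fun c _ ↦ (Finset.measurable_prod _ fun j _ ↦ hG_meas j).aemeasurable)
        (by simp [ZMod.card, hl0]) fun _ _ ↦ by positivity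
    _ = (∏ j, ∫⁻ z, G j z ∂Measure.pi ν) ^ (1 / (l : ℝ)) := by
      simp_rw [hF]
      rw [ENNReal.prod_rpow_of_nonneg (by positivity), Finset.prod_fiberwise]

/-- Generalized Hölder inequality for block-local functions under a
product measure. -/
theorem holder_inequality_for_block_local_functions
    (M l : ℕ) (hM : 0 < M) (hl : 0 < l) (N : ℕ) [NeZero N] (hN : N = M * l)
    (E : ZMod N → Type*) [∀ j, MeasurableSpace (E j)]
    (ν : ∀ j, Measure (E j)) [∀ j, IsProbabilityMeasure (ν j)]
    (g : ZMod N → (∀ j, E j) → ℝ)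
    (hg_nonneg : ∀ j z, 0 ≤ g j z)
    (hg_meas : ∀ j, Measurable (g j))
    (hg_local : ∀ j : ZMod N, ∀ z w : ∀ i, E i,
      (∀ i : Fin l, z (j + (i : ℕ)) = w (j + (i : ℕ))) → g j z = g j w) :
    ∫⁻ z, ENNReal.ofReal (Real.exp (∑ j : ZMod N, g j z)) ∂(Measure.pi ν)
      ≤ (∏ j : ZMod N,
          ∫⁻ z, ENNReal.ofReal (Real.exp ((l : ℝ) * g j z)) ∂(Measure.pi ν)) ^ (1 / (l : ℝ)) :=
  holder_inequality_for_block_local_functions_general M l hl N hN E ν g hg_meas hg_local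
end
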